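/- Lower bound via cluster contraction: the optimal CluVRP value is at least the optimal value of the CVRP instance obtained by contracting each cluster to a single node whose demand is the sum of demands in the cluster, with inter-node costs defined as the minimum edge cost between the corresponding clusters, plus the sum over clusters of the minimum Hamiltonian path cost min_{u≠v in V_k} ĉ_{uv}. -/

import Mathlib

open scoped ENNReal

/-- Cost of a walk given as a list of vertices. -/
noncomputable def pathCostE {α : Type*} (c : α → α → ℝ≥0∞) : List α → ℝ≥0∞
  | a :: b :: t => c a b + pathCostE c (b :: t)
  | _ => 0

/-- Cost of a closed route based at the depot (`none`). -/
noncomputable def routeCostE {α : Type*} (c : Option α → Option α → ℝ≥0∞) (r : List α) : ℝ≥0∞ :=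
  pathCostE c ((none :: r.map some) ++ [none])

/-- CluVRP feasibility: every customer visited exactly once, routes without
repetition, capacity `Q` respected, each cluster served contiguously by one
vehicle. -/
def CluVRPFeasible {C : Type*} {N m : ℕ} (Q : ℝ) (q : C → ℝ) (clu : C → Fin N)
    (routes : Fin m → List C) : Prop :=
  (∀ v : C, ∃! i : Fin m, v ∈ routes i) ∧
  (∀ i, (routes i).Nodup) ∧
  (∀ i, ((routes i).map q).sum ≤ Q) ∧
  (∀ k : Fin N, ∃ (i : Fin m) (l₁ l₂ l₃ : List C),
    routes i = l₁ ++ l₂ ++ l₃ ∧ ∀ v, v ∈ l₂ ↔ clu v = k)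

/-- CVRP feasibility (for the contracted instance on cluster nodes). -/
def CVRPFeasible {C : Type*} {m : ℕ} (Q : ℝ) (q : C → ℝ) (routes : Fin m → List C) : Prop :=
  (∀ v : C, ∃! i : Fin m, v ∈ routes i) ∧
  (∀ i, (routes i).Nodup) ∧
  (∀ i, ((routes i).map q).sum ≤ Q)

/-- Cost function of the contracted instance: the cost between two cluster
nodes (or the depot and a cluster node) is the minimum edge cost between the
corresponding vertex sets. -/
noncomputable def contractedCost {C : Type*} {N : ℕ} (clu : C → Fin N)
    (c : Option C → Option C → ℝ≥0∞) : Option (Fin N) → Option (Fin N) → ℝ≥0∞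
  | some k, some l => ⨅ u ∈ {v : C | clu v = k}, ⨅ w ∈ {v : C | clu v = l}, c (some u) (some w)
  | none, some l => ⨅ w ∈ {v : C | clu v = l}, c none (some w)
  | some k, none => ⨅ u ∈ {v : C | clu v = k}, c (some u) none
  | none, none => 0

/-- Minimum cost of a Hamiltonian path through cluster `k` (with free endpoints),
i.e. `min_{u ≠ v ∈ V_k} ĉ_{uv}`. -/
noncomputable def minClusterHamPath {C : Type*} {N : ℕ} (clu : C → Fin N)
    (c : Option C → Option C → ℝ≥0∞) (k : Fin N) : ℝ≥0∞ :=
  sInf {x | ∃ l : List C, l.Nodup ∧ (∀ v : C, v ∈ l ↔ clu v = k) ∧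
    x = pathCostE (fun a b => c (some a) (some b)) l}

/-!
Since every cluster is served contiguously, each CluVRP route splits into consecutive blocks,
one per cluster it visits, each block a Hamiltonian path of its cluster. The sequence of block
labels is a route of the contracted instance; these routes visit every cluster exactly once and
carry the same demand, so they are CVRP-feasible. Along a route, every edge entering or leaving
a block costs at least the corresponding contracted edge, and every block costs at least the
minimum Hamiltonian path of its cluster. Summing over the routes, which partition the clusters,
gives the bound.
-/

namespace List

variable {α : Type*} {l m r : List α}

theorem IsInfix.of_append_of_disjoint (h : m <:+: l ++ r) (hd : m.Disjoint l) : m <:+: r := by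
  obtain ⟨s, t, hst⟩ := h
  rw [append_assoc, append_eq_append_iff] at hst
  rcases hst with ⟨u, rfl, hu⟩ | ⟨u, rfl, rfl⟩
  · rw [append_eq_append_iff] at hu
    rcases hu with ⟨w, rfl, -⟩ | ⟨w, rfl, rfl⟩
    · obtain rfl : m = [] := eq_nil_iff_forall_not_mem.mpr fun x hx => hd hx (by simp [hx])
      exact nil_infix
    · obtain rfl : u = [] := eq_nil_iff_forall_not_mem.mpr fun x hx =>
        hd (a := x) (by simp [hx]) (by simp [hx])
      exact (prefix_append _ _).isInfix
  · exact infix_append' _ _ _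

theorem IsInfix.isPrefix_of_head_mem {a : α} (h : l <:+: a :: r) (hnd : (a :: r).Nodup)
    (ha : a ∈ l) : l <+: a :: r := by
  obtain ⟨s, t, hst⟩ := h
  cases s with
  | nil => exact ⟨t, hst⟩
  | cons b s =>
    obtain ⟨rfl, -⟩ := cons_eq_cons.mp hst
    rw [← hst, cons_append, cons_append, nodup_cons] at hnd
    exact absurd (mem_append_left _ (mem_append_right _ ha)) hnd.1

end List

theorem pathCostE_cons_cons {α : Type*} (c : α → α → ℝ≥0∞) (a b : α) (l : List α) :
    pathCostE c (a :: b :: l) = c a b + pathCostE c (b :: l) := rfl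

theorem pathCostE_append {α : Type*} (c : α → α → ℝ≥0∞) {l l' : List α} (hl : l ≠ [])
    (hl' : l' ≠ []) :
    pathCostE c (l ++ l') = pathCostE c l + c (l.getLast hl) (l'.head hl') + pathCostE c l' := by
  induction l with
  | nil => exact absurd rfl hl
  | cons a t ih =>
    cases t with
    | nil => obtain ⟨b, t', rfl⟩ := List.exists_cons_of_ne_nil hl'; simp [pathCostE]
    | cons b t =>
      rw [List.cons_append, List.cons_append, pathCostE_cons_cons, pathCostE_cons_cons,
        ← List.cons_append, ih (List.cons_ne_nil _ _), List.getLast_cons_cons]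
      ring

theorem pathCostE_map {α β : Type*} (g : α → β) (c : β → β → ℝ≥0∞) :
    ∀ l : List α, pathCostE c (l.map g) = pathCostE (fun a b => c (g a) (g b)) l
  | [] | [_] => rfl
  | a :: b :: l => by
    rw [List.map_cons, List.map_cons, pathCostE_cons_cons, ← List.map_cons, pathCostE_map g c,
      pathCostE_cons_cons]

theorem pathCostE_map_fst_add_sum_le_pathCostE_flatten {α β : Type*} {c : α → α → ℝ≥0∞}
    {c' : β → β → ℝ≥0∞} {g : α → β} (hc : ∀ a b, c' (g a) (g b) ≤ c a b) :
    ∀ bs : List (β × List α), (∀ p ∈ bs, p.2 ≠ [] ∧ ∀ a ∈ p.2, g a = p.1) →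
      pathCostE c' (bs.map Prod.fst) + (bs.map fun p => pathCostE c p.2).sum ≤
        pathCostE c (bs.map Prod.snd).flatten
  | [], _ | [_], _ => by simp [pathCostE]
  | (k, b) :: (k', b') :: bs, hbs => by
    obtain ⟨hb, hbk⟩ : b ≠ [] ∧ ∀ a ∈ b, g a = k := hbs _ List.mem_cons_self
    obtain ⟨hb', hbk'⟩ : b' ≠ [] ∧ ∀ a ∈ b', g a = k' :=
      hbs _ (List.mem_cons_of_mem _ List.mem_cons_self)
    have hrest : b' ++ (bs.map Prod.snd).flatten ≠ [] := List.append_ne_nil_of_left_ne_nil hb' _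
    have ih := pathCostE_map_fst_add_sum_le_pathCostE_flatten hc ((k', b') :: bs)
      fun p hp => hbs p (List.mem_cons_of_mem _ hp)
    have hjoin : c' k k' ≤ c (b.getLast hb) ((b' ++ (bs.map Prod.snd).flatten).head hrest) := by
      rw [List.head_append_of_ne_nil hb', ← hbk _ (List.getLast_mem hb),
        ← hbk' _ (List.head_mem hb')]
      exact hc _ _
    simp only [List.map_cons, List.flatten_cons, List.sum_cons] at ih ⊢
    rw [pathCostE_append c hb hrest, pathCostE_cons_cons]
    calc c' k k' + pathCostE c' (k' :: bs.map Prod.fst) +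
          (pathCostE c b + (pathCostE c b' + (bs.map fun p => pathCostE c p.2).sum))
        = pathCostE c b + c' k k' + (pathCostE c' (k' :: bs.map Prod.fst) +
          (pathCostE c b' + (bs.map fun p => pathCostE c p.2).sum)) := by ring
      _ ≤ _ := by gcongr

section ClusterBlocks

variable {α κ : Type*} (f : α → κ)

def IsClusterBlocks (bs : List (κ × List α)) : Prop :=
  ∀ p ∈ bs, p.2 ≠ [] ∧ ∀ a, a ∈ p.2 ↔ f a = p.1

variable {f}

theorem exists_isClusterBlocks_of_contiguous (r : List α) (hr : r.Nodup)
    (hcont : ∀ v ∈ r, ∃ l, l <:+: r ∧ ∀ a, a ∈ l ↔ f a = f v) :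
    ∃ bs, (bs.map Prod.snd).flatten = r ∧ IsClusterBlocks f bs := by
  induction hn : r.length using Nat.strong_induction_on generalizing r with | _ n ih
  rcases r with _ | ⟨v, r'⟩
  · exact ⟨[], rfl, by simp [IsClusterBlocks]⟩
  obtain ⟨l, hlr, hl⟩ := hcont v List.mem_cons_self
  have hvl : v ∈ l := (hl v).mpr rfl
  obtain ⟨t, ht⟩ := hlr.isPrefix_of_head_mem hr hvl
  rw [← ht] at hr hcont ⊢
  have hdisj : l.Disjoint t := List.disjoint_of_nodup_append hr
  have hlen : t.length < n := by
    simpa [← hn, ← ht] using List.length_pos_of_mem hvl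
  have hcont' : ∀ w ∈ t, ∃ m, m <:+: t ∧ ∀ a, a ∈ m ↔ f a = f w := by
    intro w hw
    obtain ⟨m, hm, hmw⟩ := hcont w (List.mem_append_right _ hw)
    refine ⟨m, hm.of_append_of_disjoint fun a ham hal => ?_, hmw⟩
    exact hdisj ((hl w).mpr (((hmw a).mp ham).symm.trans ((hl a).mp hal))) hw
  obtain ⟨bs, hflat, hbs⟩ := ih _ hlen t hr.of_append_right hcont' rfl
  refine ⟨(f v, l) :: bs, by simp [hflat], ?_⟩
  intro p hp
  rcases List.mem_cons.mp hp with rfl | hp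
  · exact ⟨List.ne_nil_of_mem hvl, hl⟩
  · exact hbs p hp

namespace IsClusterBlocks

variable {bs : List (κ × List α)}

theorem mem_flatten_of_mem_map_fst (hbs : IsClusterBlocks f bs) {k : κ}
    (hk : k ∈ bs.map Prod.fst) {a : α} (ha : f a = k) : a ∈ (bs.map Prod.snd).flatten := by
  obtain ⟨p, hp, rfl⟩ := List.mem_map.mp hk
  exact List.mem_flatten.mpr ⟨p.2, List.mem_map_of_mem hp, ((hbs p hp).2 a).mpr ha⟩

theorem apply_mem_map_fst (hbs : IsClusterBlocks f bs) {a : α}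
    (ha : a ∈ (bs.map Prod.snd).flatten) : f a ∈ bs.map Prod.fst := by
  obtain ⟨_, hb, hab⟩ := List.mem_flatten.mp ha
  obtain ⟨p, hp, rfl⟩ := List.mem_map.mp hb
  exact List.mem_map.mpr ⟨p, hp, (((hbs p hp).2 a).mp hab).symm⟩

theorem nodup_map_fst (hbs : IsClusterBlocks f bs) (hnd : (bs.map Prod.snd).flatten.Nodup) :
    (bs.map Prod.fst).Nodup := by
  have hdisj := (List.nodup_flatten.mp hnd).2
  rw [List.pairwise_map] at hdisj
  refine List.pairwise_map.mpr (hdisj.imp_of_mem fun {p p'} hp hp' hpp' hk => ?_)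
  obtain ⟨a, ha⟩ := List.exists_mem_of_ne_nil _ (hbs p hp).1
  exact hpp' ha (((hbs p' hp').2 a).mpr ((((hbs p hp).2 a).mp ha).trans hk))

theorem sum_map_fst_sum_filter {M : Type*} [AddCommMonoid M] [Fintype α] [DecidableEq κ]
    (hbs : IsClusterBlocks f bs) (hnd : (bs.map Prod.snd).flatten.Nodup) (q : α → M) :
    ((bs.map Prod.fst).map fun k => ∑ a ∈ Finset.univ.filter (f · = k), q a).sum =
      ((bs.map Prod.snd).flatten.map q).sum := by
  classical
  rw [List.map_flatten, List.sum_flatten, List.map_map, List.map_map, List.map_map]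
  congr 1
  refine List.map_congr_left fun p hp => ?_
  have hpnd : p.2.Nodup := (List.nodup_flatten.mp hnd).1 p.2 (List.mem_map_of_mem hp)
  rw [Function.comp_apply, Function.comp_apply, Function.comp_apply,
    ← List.sum_toFinset _ hpnd]
  congr 1
  ext a
  simp [(hbs p hp).2 a]

end IsClusterBlocks

end ClusterBlocks

section Contraction

variable {C : Type*} {N : ℕ} (clu : C → Fin N) (c : Option C → Option C → ℝ≥0∞)

theorem contractedCost_map_le (x y : Option C) :
    contractedCost clu c (x.map clu) (y.map clu) ≤ c x y := by
  rcases x with _ | u <;> rcases y with _ | w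
  · exact zero_le
  · exact biInf_le (fun w' => c none (some w')) rfl
  · exact biInf_le (fun u' => c (some u') none) rfl
  · exact (biInf_le (s := {v | clu v = clu u}) _ rfl).trans
      (biInf_le (fun w' => c (some u) (some w')) rfl)

variable {clu}

theorem routeCostE_contractedCost_add_sum_le {bs : List (Fin N × List C)}
    (hbs : IsClusterBlocks clu bs) :
    routeCostE (contractedCost clu c) (bs.map Prod.fst) +
        (bs.map fun p => pathCostE (fun a b => c (some a) (some b)) p.2).sum ≤
      routeCostE c (bs.map Prod.snd).flatten := by
  let depot : Option (Fin N) × List (Option C) := (none, [none])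
  have key := pathCostE_map_fst_add_sum_le_pathCostE_flatten (contractedCost_map_le clu c)
    (depot :: bs.map (fun p => (some p.1, p.2.map some)) ++ [depot]) (by
      simp only [List.cons_append, List.mem_cons, List.mem_append, List.mem_map,
        List.not_mem_nil, or_false]
      rintro _ (rfl | ⟨p, hp, rfl⟩ | rfl)
      · simp [depot]
      · simpa using ⟨(hbs p hp).1, fun a ha => ((hbs p hp).2 a).mp ha⟩
      · simp [depot])
  simpa [routeCostE, pathCostE, depot, pathCostE_map, List.map_flatten, Function.comp_def]
    using key

theorem sum_map_fst_minClusterHamPath_le {bs : List (Fin N × List C)}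
    (hbs : IsClusterBlocks clu bs) (hnd : (bs.map Prod.snd).flatten.Nodup) :
    ((bs.map Prod.fst).map (minClusterHamPath clu c)).sum ≤
      (bs.map fun p => pathCostE (fun a b => c (some a) (some b)) p.2).sum := by
  rw [List.map_map]
  refine List.sum_le_sum fun p hp => sInf_le ⟨p.2, ?_, (hbs p hp).2, rfl⟩
  exact (List.nodup_flatten.mp hnd).1 p.2 (List.mem_map_of_mem hp)

theorem routeCostE_contractedCost_add_sum_minClusterHamPath_le {bs : List (Fin N × List C)}
    (hbs : IsClusterBlocks clu bs) (hnd : (bs.map Prod.snd).flatten.Nodup) :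
    routeCostE (contractedCost clu c) (bs.map Prod.fst) +
        ((bs.map Prod.fst).map (minClusterHamPath clu c)).sum ≤
      routeCostE c (bs.map Prod.snd).flatten :=
  (add_le_add_right (sum_map_fst_minClusterHamPath_le c hbs hnd) _).trans
    (routeCostE_contractedCost_add_sum_le c hbs)

end Contraction

theorem Fintype.sum_list_sum_eq_sum_of_existsUnique {ι κ M : Type*} [Fintype ι] [Fintype κ]
    [AddCommMonoid M] {s : ι → List κ} (hnd : ∀ i, (s i).Nodup) (hs : ∀ k, ∃! i, k ∈ s i)
    (f : κ → M) : ∑ i, ((s i).map f).sum = ∑ k, f k := by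
  classical
  choose g hg using fun k => (hs k).exists
  rw [← Finset.sum_fiberwise Finset.univ g f]
  refine Finset.sum_congr rfl fun i _ => ?_
  rw [← List.sum_toFinset f (hnd i)]
  congr 1
  ext k
  simpa using ⟨fun h => (hs k).unique (hg k) h, fun h => h ▸ hg k⟩

namespace CluVRPFeasible

variable {C : Type*} {N m : ℕ} {Q : ℝ} {q : C → ℝ} {clu : C → Fin N} {routes : Fin m → List C}

theorem exists_infix_cluster (h : CluVRPFeasible Q q clu routes) (i : Fin m) :
    ∀ v ∈ routes i, ∃ l, l <:+: routes i ∧ ∀ a, a ∈ l ↔ clu a = clu v := by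
  intro v hv
  obtain ⟨j, l₁, l₂, l₃, hj, hl⟩ := h.2.2.2 (clu v)
  have hvj : v ∈ routes j :=
    hj ▸ List.mem_append_left _ (List.mem_append_right _ ((hl v).mpr rfl))
  obtain rfl : j = i := (h.1 v).unique hvj hv
  exact ⟨l₂, hj ▸ List.infix_append _ _ _, hl⟩

theorem cvrpFeasible_map_fst [Fintype C] (h : CluVRPFeasible Q q clu routes)
    (hsurj : Function.Surjective clu) {bs : Fin m → List (Fin N × List C)}
    (hflat : ∀ i, ((bs i).map Prod.snd).flatten = routes i)
    (hbs : ∀ i, IsClusterBlocks clu (bs i)) :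
    CVRPFeasible Q (fun k => ∑ v ∈ Finset.univ.filter (fun v => clu v = k), q v)
      (fun i => (bs i).map Prod.fst) := by
  have hnd i : ((bs i).map Prod.snd).flatten.Nodup := (hflat i).symm ▸ h.2.1 i
  refine ⟨fun k => ?_, fun i => (hbs i).nodup_map_fst (hnd i), fun i => ?_⟩
  · obtain ⟨v, rfl⟩ := hsurj k
    obtain ⟨i, hvi, huniq⟩ := h.1 v
    refine ⟨i, (hbs i).apply_mem_map_fst ((hflat i).symm ▸ hvi), fun j hj => huniq j ?_⟩
    exact (hflat j ▸ (hbs j).mem_flatten_of_mem_map_fst hj rfl : v ∈ routes j)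
  · rw [(hbs i).sum_map_fst_sum_filter (hnd i), hflat i]
    exact h.2.2.1 i

end CluVRPFeasible

theorem cluvrp_contraction_lower_bound_general {C : Type*} [Fintype C]
    {N m : ℕ} (Q : ℝ) (q : C → ℝ)
    (clu : C → Fin N) (hsurj : Function.Surjective clu)
    (c : Option C → Option C → ℝ≥0∞) :
    sInf {x | ∃ routes : Fin m → List C, CluVRPFeasible Q q clu routes ∧
        x = ∑ i, routeCostE c (routes i)} ≥
      sInf {x | ∃ routes' : Fin m → List (Fin N),
          CVRPFeasible Q (fun k => ∑ v ∈ Finset.univ.filter (fun v => clu v = k), q v) routes' ∧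
          x = ∑ i, routeCostE (contractedCost clu c) (routes' i)} +
        ∑ k : Fin N, minClusterHamPath clu c k := by
  refine le_sInf ?_
  rintro _ ⟨routes, hfeas, rfl⟩
  choose bs hflat hbs using fun i =>
    exists_isClusterBlocks_of_contiguous (routes i) (hfeas.2.1 i) (hfeas.exists_infix_cluster i)
  have hcvrp := hfeas.cvrpFeasible_map_fst hsurj hflat hbs
  calc _ ≤ ∑ i, routeCostE (contractedCost clu c) ((bs i).map Prod.fst) +
        ∑ i, (((bs i).map Prod.fst).map (minClusterHamPath clu c)).sum := by
        rw [Fintype.sum_list_sum_eq_sum_of_existsUnique hcvrp.2.1 hcvrp.1]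
        gcongr
        exact sInf_le ⟨_, hcvrp, rfl⟩
    _ = ∑ i, (routeCostE (contractedCost clu c) ((bs i).map Prod.fst) +
        (((bs i).map Prod.fst).map (minClusterHamPath clu c)).sum) := Finset.sum_add_distrib.symm
    _ ≤ ∑ i, routeCostE c (routes i) := Finset.sum_le_sum fun i _ =>
        hflat i ▸ routeCostE_contractedCost_add_sum_minClusterHamPath_le c (hbs i)
          ((hflat i).symm ▸ hfeas.2.1 i)

/-- Lower bound via cluster contraction: the optimal CluVRP value is at least
the optimal value of the contracted CVRP instance (cluster nodes, summed
demands, minimum inter-cluster edge costs) plus the sum over clusters of the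
minimum intra-cluster Hamiltonian path cost. -/
theorem cluvrp_contraction_lower_bound {C : Type*} [Fintype C] [DecidableEq C]
    {N m : ℕ} (Q : ℝ) (q : C → ℝ) (hq : ∀ v, 0 ≤ q v)
    (clu : C → Fin N) (hsurj : Function.Surjective clu)
    (c : Option C → Option C → ℝ≥0∞) :
    sInf {x | ∃ routes : Fin m → List C, CluVRPFeasible Q q clu routes ∧
        x = ∑ i, routeCostE c (routes i)} ≥
      sInf {x | ∃ routes' : Fin m → List (Fin N),
          CVRPFeasible Q (fun k => ∑ v ∈ Finset.univ.filter (fun v => clu v = k), q v) routes' ∧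
          x = ∑ i, routeCostE (contractedCost clu c) (routes' i)} +
        ∑ k : Fin N, minClusterHamPath clu c k :=
  cluvrp_contraction_lower_bound_general Q q clu hsurj c
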